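/- Let 𝔤 ⊂ 𝔡 be a Manin pair with chosen Lagrangian complement, giving a vector space splitting 𝔡 ≅ 𝔥 ⊕ 𝔥' with 𝔥 = 𝔤 (here relabeled) Lagrangian. Writing the structure constants [e_i,e_j] = f_{ij}^k e_k, [e_i, ẽ_j] = A_{ij}^k e_k + B_{ij}^k ẽ_k, [ẽ_i, ẽ_j] = C_{ij}^k e_k + D_{ij}^k ẽ_k in bases {e_i} of 𝔥 and {ẽ_i} of the complement, and letting c = P + Q with P ∈ Sym²(𝔥), Q ∈ 𝔥 ⊗ 𝔡/𝔥 the inverse of the pairing, the formulas δ^{ij}_k = (1/2)(A^j_{ka} Q^{ia} − A^i_{ka} Q^{ja}) define a map δ: 𝔥 → ∧²(𝔥) which is a Chevalley–Eilenberg 1-cocycle (d_CE δ = 0). -/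

import Mathlib

/-!
Write `F_p`, `A_p`, `B_p` for the matrices `(f_{pa}^b)`, `(A_{pa}^b)`, `(B_{pa}^b)`, so that
`δ_k = ½ (Q A_k - (Q A_k)ᵀ)`. The Chevalley–Eilenberg differential commutes with transposition,
and the invariance identity `h4`, combined with the antisymmetry of `f`, reads `F_pᵀ Q = -Q B_p`.
Hence `(d δ)(p, q) = ½ (Q J_{pq} - (Q J_{pq})ᵀ)` with
`J_{pq} = A_q F_p + B_q A_p - (A_p F_q + B_p A_q) - f_{pq}^a A_a`.
Now `J_{pq}` is the lower-left block of `ρ_q ρ_p - ρ_p ρ_q - f_{pq}^a ρ_a`, where `ρ_p` is the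
matrix of `ad e_p` on coefficient row vectors with respect to `e, ẽ`, and this vanishes by the
Jacobi identity of `𝔡`.
-/

open Finset

variable {k : Type*} [Field k] [CharZero k]
variable {L : Type*} [LieRing L] [LieAlgebra k L]
variable {ι : Type*} [Fintype ι] [DecidableEq ι]

/-- Components of the Chevalley–Eilenberg differential `(d_CE δ)(e_p, e_q)^{ij}` of a
`∧²𝔥`-valued 1-cochain `δ` on the Lie algebra `𝔥` with structure constants `f`. -/
def dCEone (f δ : ι → ι → ι → k) (p q i j : ι) : k :=
  (∑ a, (f p a i * δ q a j + f p a j * δ q i a))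
    - (∑ a, (f q a i * δ p a j + f q a j * δ p i a))
    - (∑ a, f p q a * δ a i j)

/-- The cobracket components `δ^{ij}_k = (1/2)(A^j_{ka} Q^{ia} − A^i_{ka} Q^{ja})`. -/
def deltaForm (A : ι → ι → ι → k) (Q : ι → ι → k) (kk i j : ι) : k :=
  (1/2 : k) * ∑ a, (A kk a j * Q i a - A kk a i * Q j a)

open Matrix

section CochainAlgebra

variable {R : Type*} [CommRing R] {n : Type*} [Fintype n]

/-- `d_CE` on `𝔥 ⊗ 𝔥`-valued 1-cochains, in matrix form; `F p` is the matrix of `ad e_p` on `𝔥`. -/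
def ceDiff (F δ : n → Matrix n n R) (p q : n) : Matrix n n R :=
  (F p)ᵀ * δ q + δ q * F p - ((F q)ᵀ * δ p + δ p * F q) - ∑ a, F p q a • δ a

theorem ceDiff_transpose (F δ : n → Matrix n n R) (p q : n) :
    ceDiff F (fun a => (δ a)ᵀ) p q = (ceDiff F δ p q)ᵀ := by
  simp only [ceDiff, transpose_sub, transpose_add, transpose_mul, transpose_transpose,
    transpose_sum, transpose_smul]
  abel

theorem ceDiff_smul_sub (F δ δ' : n → Matrix n n R) (c : R) (p q : n) :
    ceDiff F (fun a => c • (δ a - δ' a)) p q = c • (ceDiff F δ p q - ceDiff F δ' p q) := by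
  simp only [ceDiff, mul_sub, sub_mul, mul_smul_comm, smul_mul_assoc, smul_sub, smul_add,
    Finset.smul_sum, smul_comm c, Finset.sum_sub_distrib]
  abel

theorem ceDiff_mul_left {F G Y : n → Matrix n n R} {Q : Matrix n n R}
    (hQ : ∀ p, (F p)ᵀ * Q = -(Q * G p)) (p q : n) :
    ceDiff F (fun a => Q * Y a) p q
      = Q * (Y q * F p + G q * Y p - (Y p * F q + G p * Y q) - ∑ a, F p q a • Y a) := by
  simp only [ceDiff, ← Matrix.mul_assoc, hQ, mul_add, mul_sub, Matrix.mul_sum, mul_smul_comm,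
    neg_mul]
  abel

theorem dCEone_eq_ceDiff {K : Type*} [Field K] (f δ : n → n → n → K) (p q i j : n) :
    dCEone f δ p q i j = ceDiff (fun a => of (f a)) (fun a => of (δ a)) p q i j := by
  simp only [dCEone, ceDiff, Matrix.sub_apply, Matrix.add_apply, mul_apply, transpose_apply,
    of_apply, Matrix.sum_apply, Matrix.smul_apply, smul_eq_mul, Finset.sum_add_distrib,
    mul_comm (δ _ _ _)]

theorem of_deltaForm {K : Type*} [Field K] (A : n → n → n → K) (Q : n → n → K) (a : n) :
    of (deltaForm A Q a) = (1 / 2 : K) • (of Q * of (A a) - (of Q * of (A a))ᵀ) := by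
  ext i j
  simp only [deltaForm, Matrix.smul_apply, Matrix.sub_apply, transpose_apply, mul_apply, of_apply,
    smul_eq_mul, ← Finset.sum_sub_distrib]
  congr 1
  exact Finset.sum_congr rfl fun b _ => by ring

end CochainAlgebra

section AdjointMatrices

variable {R : Type*} [CommRing R] {M : Type*} [LieRing M] [LieAlgebra R M] {n : Type*} [Fintype n]

theorem LinearIndependent.structureConstants_antisymm {e : n → M} (he : LinearIndependent R e)
    {f : n → n → n → R} (hee : ∀ i j, ⁅e i, e j⁆ = ∑ l, f i j l • e l) (i j : n) :
    f i j = -f j i :=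
  he.fintypeLinearCombination_injective <| by
    simp only [Fintype.linearCombination_apply, ← hee, map_neg, lie_skew]

/-- Row `s` holds the coefficients of `⁅e p, Sum.elim e et s⁆` with respect to `Sum.elim e et`. -/
def adMatrix (f A B : n → n → n → R) (p : n) : Matrix (n ⊕ n) (n ⊕ n) R :=
  fromBlocks (of (f p)) 0 (of (A p)) (of (B p))

variable {e et : n → M} {f A B : n → n → n → R}

theorem lie_linearCombination (hee : ∀ i j, ⁅e i, e j⁆ = ∑ l, f i j l • e l)
    (heet : ∀ i j, ⁅e i, et j⁆ = ∑ l, (A i j l • e l + B i j l • et l)) (p : n) (x : n ⊕ n → R) :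
    ⁅e p, Fintype.linearCombination R (Sum.elim e et) x⁆
      = Fintype.linearCombination R (Sum.elim e et) (x ᵥ* adMatrix f A B p) := by
  have row : ∀ s, ⁅e p, Sum.elim e et s⁆
      = Fintype.linearCombination R (Sum.elim e et) (adMatrix f A B p s) := by
    rintro (l | l) <;>
      simp [Fintype.linearCombination_apply, Fintype.sum_sum_type, adMatrix, hee, heet,
        Finset.sum_add_distrib]
  conv_lhs => rw [Fintype.linearCombination_apply, lie_sum]
  simp only [lie_smul, row, vecMul_eq_sum, map_sum, map_smul]

theorem adMatrix_commutator (hindep : LinearIndependent R (Sum.elim e et))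
    (hee : ∀ i j, ⁅e i, e j⁆ = ∑ l, f i j l • e l)
    (heet : ∀ i j, ⁅e i, et j⁆ = ∑ l, (A i j l • e l + B i j l • et l)) (p q : n) :
    adMatrix f A B q * adMatrix f A B p - adMatrix f A B p * adMatrix f A B q
      = ∑ a, f p q a • adMatrix f A B a := by
  refine ext_iff_vecMul.mpr fun x => hindep.fintypeLinearCombination_injective ?_
  have lie_comb := lie_linearCombination (R := R) hee heet
  simp only [vecMul_sub, vecMul_sum, vecMul_smul, ← vecMul_vecMul, map_sub, map_sum, map_smul,
    ← lie_comb, ← smul_lie, ← sum_lie, ← hee, leibniz_lie (e p), add_sub_cancel_right]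

theorem adMatrix_jacobi_lowerLeft (hindep : LinearIndependent R (Sum.elim e et))
    (hee : ∀ i j, ⁅e i, e j⁆ = ∑ l, f i j l • e l)
    (heet : ∀ i j, ⁅e i, et j⁆ = ∑ l, (A i j l • e l + B i j l • et l)) (p q : n) :
    of (A q) * of (f p) + of (B q) * of (A p) - (of (A p) * of (f q) + of (B p) * of (A q))
      = ∑ a, f p q a • of (A a) := by
  ext m r
  simpa [adMatrix, fromBlocks_multiply, Matrix.sum_apply] using
    congrFun₂ (adMatrix_commutator hindep hee heet p q) (.inr m) (.inl r)

end AdjointMatrices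

theorem transpose_of_mul_of_eq_neg {R : Type*} [CommRing R] {n : Type*} [Fintype n]
    {f B : n → n → n → R} {Q : n → n → R} (hf : ∀ i j, f i j = -f j i)
    (h4 : ∀ i a j, ∑ kk, f kk j i * Q kk a = ∑ kk, B j kk a * Q i kk) (p : n) :
    (of (f p))ᵀ * of Q = -(of Q * of (B p)) := by
  ext s b
  simp only [mul_apply, transpose_apply, of_apply, Matrix.neg_apply, hf p, Pi.neg_apply,
    neg_mul, Finset.sum_neg_distrib, h4 s b p, mul_comm (Q s _)]

theorem maninPair_deltaForm_isCocycle_general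
    (e et : ι → L) (f A B : ι → ι → ι → k) (Q : ι → ι → k)
    (hindep : LinearIndependent k (Sum.elim e et))
    (hee : ∀ i j, ⁅e i, e j⁆ = ∑ l, f i j l • e l)
    (heet : ∀ i j, ⁅e i, et j⁆ = ∑ l, (A i j l • e l + B i j l • et l))
    (h4 : ∀ i a j, ∑ kk, f kk j i * Q kk a = ∑ kk, B j kk a * Q i kk) :
    ∀ p q i j, dCEone f (deltaForm A Q) p q i j = 0 := by
  have hf := (hindep.comp Sum.inl Sum.inl_injective).structureConstants_antisymm hee
  have hQ := transpose_of_mul_of_eq_neg hf h4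
  intro p q i j
  rw [dCEone_eq_ceDiff, funext (of_deltaForm A Q), ceDiff_smul_sub, ceDiff_transpose,
    ceDiff_mul_left hQ]
  simp only [of_apply, adMatrix_jacobi_lowerLeft hindep hee heet, sub_self, mul_zero,
    transpose_zero, smul_zero, Matrix.zero_apply]

/-- In a Manin pair `𝔥 ⊂ 𝔡` with Lagrangian complement (bases `e`, `ẽ`
of `𝔥` and the complement, structure constants `f, A, B, C, D`, and `c = P + Q` the
inverse of the invariant pairing, encoded via the invariance identities (1)–(5)),
the formula `δ^{ij}_k = (1/2)(A^j_{ka} Q^{ia} − A^i_{ka} Q^{ja})` defines a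
Chevalley–Eilenberg 1-cocycle `δ : 𝔥 → ∧²𝔥`, i.e. `d_CE δ = 0`. -/
theorem maninPair_deltaForm_isCocycle
    (e et : ι → L) (f A B C D : ι → ι → ι → k) (P Q : ι → ι → k)
    (hindep : LinearIndependent k (Sum.elim e et))
    (hee : ∀ i j, ⁅e i, e j⁆ = ∑ l, f i j l • e l)
    (heet : ∀ i j, ⁅e i, et j⁆ = ∑ l, (A i j l • e l + B i j l • et l))
    (hetet : ∀ i j, ⁅et i, et j⁆ = ∑ l, (C i j l • e l + D i j l • et l))
    (hP : ∀ i j, P i j = P j i)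
    (h1 : ∀ i a kk, ∑ j, (A j kk i * P j a + C j kk i * Q a j
            + A j kk a * P j i + C j kk a * Q i j) = 0)
    (h2 : ∀ i a j, ∑ kk, (A j kk i * Q a kk - f kk j i * P kk a
            + A j kk a * Q i kk - f kk j a * P kk i) = 0)
    (h3 : ∀ i a kk, ∑ j, (A j kk i * Q j a + B j kk a * P i j + D j kk a * Q i j) = 0)
    (h4 : ∀ i a j, ∑ kk, f kk j i * Q kk a = ∑ kk, B j kk a * Q i kk)
    (h5 : ∀ i a kk, ∑ j, (B j kk i * Q j a + B j kk a * Q j i) = 0) :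
    ∀ p q i j, dCEone f (deltaForm A Q) p q i j = 0 :=
  maninPair_deltaForm_isCocycle_general e et f A B Q hindep hee heet h4
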